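/- arXiv:1905.04774 — 2 statements merged into one kernel-verified Lean document; each statement's English description precedes it below -/
import Mathlib

section
/- Let Γ be a group, δ ∈ Γ an element, and θ₁ : Γ → F₁, θ₂ : Γ → F₂ surjective homomorphisms onto finite groups with torsion-free kernels. Let Θ(g) = (θ₁(g), θ₂(g)) : Γ → F₁ × F₂. Suppose θᵢ(δ) has order kᵢ for i = 1, 2, and every prime dividing gcd(k₁, k₂) appears with distinct exponents in k₁ and k₂. Then H = Θ⁻¹⟨(θ₁(δ), θ₂(δ))⟩ is a torsion-free subgroup of finite index in Γ containing δ. -/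
/-!
If `g ∈ H` has finite order, torsion-freeness of the kernels forces `orderOf g = orderOf (θᵢ g)`
for both `i`. Writing `Θ g = (θ₁ δ, θ₂ δ) ^ n`, this common order is `d = kᵢ / gcd(kᵢ, n)`
for both `i`. For a prime `p ∣ d` the `p`-adic valuations satisfy `vₚ(kᵢ) = vₚ(n) + vₚ(d)`,
so `vₚ(k₁) = vₚ(k₂)` although `p ∣ gcd(k₁, k₂)`; hence `d = 1` and `g = 1`.
-/

theorem Nat.factorization_eq_add_factorization_div_gcd {k n p : ℕ} (hp : p.Prime) (hk : k ≠ 0)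
    (hpd : p ∣ k / k.gcd n) :
    k.factorization p = n.factorization p + (k / k.gcd n).factorization p := by
  have hn : n ≠ 0 := by
    rintro rfl
    rw [Nat.gcd_zero_right, Nat.div_self (Nat.pos_of_ne_zero hk)] at hpd
    exact hp.not_dvd_one hpd
  have hquot : (k / k.gcd n).factorization p =
      k.factorization p - min (k.factorization p) (n.factorization p) := by
    rw [Nat.factorization_div (Nat.gcd_dvd_left k n), Nat.factorization_gcd hk hn]
    rfl
  have hpos : 0 < (k / k.gcd n).factorization p :=
    hp.factorization_pos_of_dvd (Nat.div_ne_zero_iff_of_dvd (Nat.gcd_dvd_left k n) |>.mpr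
      ⟨hk, (Nat.gcd_pos_of_pos_right k (Nat.pos_of_ne_zero hn)).ne'⟩) hpd
  omega

theorem Nat.div_gcd_eq_one_of_factorization_ne {k₁ k₂ n : ℕ} (hk₁ : k₁ ≠ 0) (hk₂ : k₂ ≠ 0)
    (hexp : ∀ p : ℕ, p.Prime → p ∣ k₁.gcd k₂ → k₁.factorization p ≠ k₂.factorization p)
    (h : k₁ / k₁.gcd n = k₂ / k₂.gcd n) : k₁ / k₁.gcd n = 1 := by
  by_contra hd
  set p := (k₁ / k₁.gcd n).minFac
  have hp : p.Prime := Nat.minFac_prime hd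
  have hpd₁ : p ∣ k₁ / k₁.gcd n := Nat.minFac_dvd _
  have hpd₂ : p ∣ k₂ / k₂.gcd n := h ▸ hpd₁
  have hpk₁ : p ∣ k₁ := hpd₁.trans (Nat.div_dvd_of_dvd (Nat.gcd_dvd_left k₁ n))
  have hpk₂ : p ∣ k₂ := hpd₂.trans (Nat.div_dvd_of_dvd (Nat.gcd_dvd_left k₂ n))
  apply hexp p hp (Nat.dvd_gcd hpk₁ hpk₂)
  rw [Nat.factorization_eq_add_factorization_div_gcd hp hk₁ hpd₁,
    Nat.factorization_eq_add_factorization_div_gcd hp hk₂ hpd₂, h]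

theorem orderOf_pow_eq_one_of_orderOf_pow_eq {F₁ F₂ : Type*} [Group F₁] [Group F₂]
    [Finite F₁] [Finite F₂] {a : F₁} {b : F₂}
    (hexp : ∀ p : ℕ, p.Prime → p ∣ (orderOf a).gcd (orderOf b) →
      (orderOf a).factorization p ≠ (orderOf b).factorization p)
    {n : ℕ} (h : orderOf (a ^ n) = orderOf (b ^ n)) : orderOf (a ^ n) = 1 := by
  rw [orderOf_pow, orderOf_pow] at *
  exact Nat.div_gcd_eq_one_of_factorization_ne (orderOf_pos a).ne' (orderOf_pos b).ne' hexp h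

theorem MonoidHom.orderOf_map_of_torsionFree_ker {G F : Type*} [Group G] [Group F] (θ : G →* F)
    (htf : ∀ x ∈ θ.ker, IsOfFinOrder x → x = 1) {g : G} (hg : IsOfFinOrder g) :
    orderOf (θ g) = orderOf g := by
  refine Nat.dvd_antisymm (orderOf_map_dvd θ g) (orderOf_dvd_of_pow_eq_one (htf _ ?_ hg.pow))
  rw [MonoidHom.mem_ker, map_pow, pow_orderOf_eq_one]

theorem subgroup_lemma_general {Γ F₁ F₂ : Type*} [Group Γ] [Group F₁] [Group F₂]
    [Finite F₁] [Finite F₂]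
    (θ₁ : Γ →* F₁) (θ₂ : Γ →* F₂)
    (htf₁ : ∀ g ∈ θ₁.ker, IsOfFinOrder g → g = 1)
    (htf₂ : ∀ g ∈ θ₂.ker, IsOfFinOrder g → g = 1)
    (δ : Γ) (k₁ k₂ : ℕ) (hk₁ : orderOf (θ₁ δ) = k₁) (hk₂ : orderOf (θ₂ δ) = k₂)
    (hexp : ∀ p : ℕ, p.Prime → p ∣ Nat.gcd k₁ k₂ →
      k₁.factorization p ≠ k₂.factorization p) :
    let Θ : Γ →* F₁ × F₂ := θ₁.prod θ₂
    let H : Subgroup Γ := Subgroup.comap Θ (Subgroup.zpowers (θ₁ δ, θ₂ δ))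
    δ ∈ H ∧ H.FiniteIndex ∧ ∀ g ∈ H, IsOfFinOrder g → g = 1 := by
  intro Θ H
  refine ⟨Subgroup.mem_zpowers _, Subgroup.finiteIndex_of_le (Θ.ker_le_comap _), ?_⟩
  intro g hg hfin
  obtain ⟨n, hn⟩ := mem_powers_iff_mem_zpowers.mpr hg
  have hn₁ : θ₁ δ ^ n = θ₁ g := congrArg Prod.fst hn
  have hn₂ : θ₂ δ ^ n = θ₂ g := congrArg Prod.snd hn
  have hord₁ : orderOf (θ₁ δ ^ n) = orderOf g := hn₁ ▸ θ₁.orderOf_map_of_torsionFree_ker htf₁ hfin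
  have hord₂ : orderOf (θ₂ δ ^ n) = orderOf g := hn₂ ▸ θ₂.orderOf_map_of_torsionFree_ker htf₂ hfin
  subst hk₁ hk₂
  rw [← orderOf_eq_one_iff, ← hord₁]
  exact orderOf_pow_eq_one_of_orderOf_pow_eq hexp (hord₁.trans hord₂.symm)

/-- Subgroup Lemma (Long–Reid): if `θ₁, θ₂` are surjections onto finite groups with
torsion-free kernels and the orders `k₁, k₂` of `θ₁ δ, θ₂ δ` are such that every prime
dividing `gcd k₁ k₂` appears with distinct exponents in `k₁` and `k₂`, then the preimage
under `Θ = (θ₁, θ₂)` of the cyclic subgroup generated by `(θ₁ δ, θ₂ δ)` is a torsion-free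
finite-index subgroup containing `δ`. -/
theorem subgroup_lemma {Γ F₁ F₂ : Type*} [Group Γ] [Group F₁] [Group F₂]
    [Finite F₁] [Finite F₂]
    (θ₁ : Γ →* F₁) (θ₂ : Γ →* F₂)
    (h₁ : Function.Surjective θ₁) (h₂ : Function.Surjective θ₂)
    (htf₁ : ∀ g ∈ θ₁.ker, IsOfFinOrder g → g = 1)
    (htf₂ : ∀ g ∈ θ₂.ker, IsOfFinOrder g → g = 1)
    (δ : Γ) (k₁ k₂ : ℕ) (hk₁ : orderOf (θ₁ δ) = k₁) (hk₂ : orderOf (θ₂ δ) = k₂)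
    (hexp : ∀ p : ℕ, p.Prime → p ∣ Nat.gcd k₁ k₂ →
      k₁.factorization p ≠ k₂.factorization p) :
    let Θ : Γ →* F₁ × F₂ := θ₁.prod θ₂
    let H : Subgroup Γ := Subgroup.comap Θ (Subgroup.zpowers (θ₁ δ, θ₂ δ))
    δ ∈ H ∧ H.FiniteIndex ∧ ∀ g ∈ H, IsOfFinOrder g → g = 1 :=
  subgroup_lemma_general θ₁ θ₂ htf₁ htf₂ δ k₁ k₂ hk₁ hk₂ hexp
end

section
/- For m > 2, the kernel of the reduction homomorphism GL(n, ℤ) → GL(n, ℤ/mℤ) is torsion-free. -/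
/-!
Let `g = 1 + x` lie in the kernel with `g ^ p = 1`, `p` prime (every nontrivial element of finite
order has a power of prime order), and choose a prime power `q ^ k ∣ m` with `q ^ k > 2`: either
`4 ∣ m` or an odd prime divides `m`. The binomial theorem gives
`p x = -∑_{i ≥ 2} (p choose i) x ^ i`.
If `q ^ k ∣ x`, every term on the right is divisible by `q ^ (k + 1)`, and by `q ^ (k + 2)` when
`p = q`: then `p` divides the binomial coefficients for `i < p`, while `x ^ p` is divisible by
`q ^ (k p)`, and `k p ≥ k + 2` is exactly the condition `q ^ k > 2`. Cancelling `p` gives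
`q ^ (k + 1) ∣ x`, so `x` is divisible by every power of `q`, hence `x = 0`.
-/

open Finset

lemma Nat.Prime.pow_add_two_dvd_choose_mul_pow {q k i : ℕ} (hq : q.Prime) (hqk : 2 < q ^ k)
    (hi : 2 ≤ i) (hiq : i ≤ q) : q ^ (k + 2) ∣ q.choose i * q ^ (k * i) := by
  have hk : 1 ≤ k := Nat.pos_of_ne_zero (by rintro rfl; simp at hqk)
  rcases hiq.lt_or_eq with hlt | rfl
  · rw [pow_succ']
    exact mul_dvd_mul (hq.dvd_choose_self (by omega) hlt) (pow_dvd_pow q (by nlinarith))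
  · refine (pow_dvd_pow i ?_).mul_left _
    rcases hk.eq_or_lt with rfl | hk
    · simp only [pow_one] at hqk
      omega
    · nlinarith

section Ring

variable {R : Type*} [Ring R]

lemma one_add_pow_eq_one_add_natCast_mul_add_sum (x : R) (p : ℕ) :
    (1 + x) ^ p = 1 + p * x + ∑ j ∈ range (p - 1), (p.choose (j + 2) : R) * x ^ (j + 2) := by
  rcases p with _ | p
  · simp
  rw [add_comm 1 x, (Commute.one_right x).add_pow, sum_range_succ', sum_range_succ']
  simp only [one_pow, mul_one, pow_zero, Nat.choose_zero_right, Nat.cast_one, zero_add, pow_one,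
    Nat.choose_one_right, Nat.add_sub_cancel, ← Nat.cast_comm]
  abel

lemma natCast_mul_eq_neg_sum_of_one_add_pow_eq_one {p q k : ℕ} {y : R}
    (h : (1 + (q : R) ^ k * y) ^ p = 1) :
    ((p * q ^ k : ℕ) : R) * y =
      -∑ j ∈ range (p - 1),
        ((p.choose (j + 2) * q ^ (k * (j + 2)) : ℕ) : R) * y ^ (j + 2) := by
  rw [one_add_pow_eq_one_add_natCast_mul_add_sum, add_assoc, add_eq_left] at h
  rw [eq_neg_iff_add_eq_zero, ← h, Nat.cast_mul, Nat.cast_pow, mul_assoc]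
  congr 1
  refine sum_congr rfl fun j _ => ?_
  rw [(Commute.pow_left (Nat.cast_commute q y) k).mul_pow, ← pow_mul, Nat.cast_mul, Nat.cast_pow,
    mul_assoc]

lemma natCast_dvd_of_natCast_dvd_natCast_mul {p q : ℕ} (hpq : p.Coprime q) {y : R}
    (h : (q : R) ∣ p * y) : (q : R) ∣ y := by
  obtain ⟨z, hz⟩ := h
  obtain ⟨a, b, hab⟩ := Nat.isCoprime_iff_coprime.2 hpq
  refine ⟨a * z + b * y, ?_⟩
  calc y = ((a * p + b * q : ℤ) : R) * y := by rw [hab, Int.cast_one, one_mul]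
    _ = a * (p * y) + q * (b * y) := by
        push_cast
        rw [add_mul, mul_assoc, (Int.cast_commute b (q : R)).eq, mul_assoc]
    _ = q * (a * z + b * y) := by
        rw [hz, ← mul_assoc, (Int.cast_commute a (q : R)).eq, mul_add, mul_assoc]

variable [IsAddTorsionFree R]

lemma dvd_of_natCast_mul_dvd_natCast_mul {n m : ℕ} (hn : n ≠ 0) {a : R}
    (h : ((n * m : ℕ) : R) ∣ n * a) : (m : R) ∣ a := by
  obtain ⟨z, hz⟩ := h
  refine ⟨z, IsAddTorsionFree.nsmul_right_injective hn ?_⟩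
  simp only [nsmul_eq_mul, hz, Nat.cast_mul, mul_assoc]

lemma natCast_dvd_of_one_add_pow_eq_one {p q k : ℕ} (hp : p.Prime) (hq : q.Prime)
    (hqk : 2 < q ^ k) {y : R} (h : (1 + (q : R) ^ k * y) ^ p = 1) : (q : R) ∣ y := by
  have hsum := natCast_mul_eq_neg_sum_of_one_add_pow_eq_one h
  rcases eq_or_ne p q with rfl | hpq
  · have hdvd : ((p ^ (k + 1) * p : ℕ) : R) ∣ (p ^ (k + 1) : ℕ) * y := by
      rw [← pow_succ, pow_succ' p k, hsum]
      refine (dvd_sum fun j hj => (Nat.cast_dvd_cast ?_).mul_right _).neg_right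
      exact hp.pow_add_two_dvd_choose_mul_pow hqk (by omega) (by rw [mem_range] at hj; omega)
    exact dvd_of_natCast_mul_dvd_natCast_mul (pow_ne_zero _ hp.ne_zero) hdvd
  · have hk : 0 < k := Nat.pos_of_ne_zero (by rintro rfl; simp at hqk)
    have hdvd : ((q ^ k * q : ℕ) : R) ∣ (q ^ k : ℕ) * (p * y) := by
      rw [← mul_assoc, ← Nat.cast_mul, Nat.mul_comm (q ^ k) p, hsum, ← pow_succ]
      refine (dvd_sum fun j _ => (Nat.cast_dvd_cast ?_).mul_right _).neg_right
      exact (pow_dvd_pow q (by nlinarith)).mul_left _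
    exact natCast_dvd_of_natCast_dvd_natCast_mul ((Nat.coprime_primes hp hq).2 hpq)
      (dvd_of_natCast_mul_dvd_natCast_mul (pow_ne_zero _ hq.ne_zero) hdvd)

lemma natCast_pow_dvd_of_one_add_pow_eq_one {p q k : ℕ} (hp : p.Prime) (hq : q.Prime)
    (hqk : 2 < q ^ k) {x : R} (hx : (q : R) ^ k ∣ x) (h : (1 + x) ^ p = 1) (j : ℕ) :
    (q : R) ^ j ∣ x := by
  suffices ∀ i, (q : R) ^ (k + i) ∣ x from (pow_dvd_pow _ (Nat.le_add_left j k)).trans (this j)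
  intro i
  induction i with
  | zero => exact hx
  | succ i ih =>
    obtain ⟨y, rfl⟩ := ih
    rw [← add_assoc, pow_succ]
    refine mul_dvd_mul_left _ (natCast_dvd_of_one_add_pow_eq_one hp hq ?_ h)
    exact hqk.trans_le (Nat.pow_le_pow_right hq.pos (Nat.le_add_right k i))

end Ring

lemma Nat.exists_prime_pow_dvd_of_two_lt {m : ℕ} (hm : 2 < m) :
    ∃ q k : ℕ, q.Prime ∧ 2 < q ^ k ∧ q ^ k ∣ m := by
  rcases Nat.four_dvd_or_exists_odd_prime_and_dvd_of_two_lt hm with h4 | ⟨q, hq, hqm, hodd⟩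
  · exact ⟨2, 2, Nat.prime_two, by norm_num, h4⟩
  · refine ⟨q, 1, hq, ?_, by rwa [pow_one]⟩
    obtain ⟨r, rfl⟩ := hodd
    have := hq.two_le
    rw [pow_one]
    omega

lemma Subgroup.eq_one_of_isOfFinOrder_of_forall_prime {G : Type*} [Group G] (H : Subgroup G)
    (h : ∀ p : ℕ, p.Prime → ∀ g ∈ H, g ^ p = 1 → g = 1) :
    ∀ g ∈ H, IsOfFinOrder g → g = 1 := by
  intro g hg hfin
  by_contra hne
  have hp : (orderOf g).minFac.Prime := Nat.minFac_prime (by rwa [Ne, orderOf_eq_one_iff])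
  have hord := orderOf_pow_orderOf_div hfin.orderOf_pos.ne' (Nat.minFac_dvd (orderOf g))
  have := h _ hp _ (H.pow_mem hg _) (hord ▸ pow_orderOf_eq_one _)
  rw [this, orderOf_one] at hord
  exact hp.one_lt.ne hord

namespace Matrix

instance {m n α : Type*} [AddMonoid α] [IsAddTorsionFree α] : IsAddTorsionFree (Matrix m n α) :=
  inferInstanceAs (IsAddTorsionFree (m → n → α))

variable {n : Type*} [Fintype n] [DecidableEq n]

lemma natCast_dvd_iff {α : Type*} [Semiring α] {c : ℕ} {A : Matrix n n α} :
    (c : Matrix n n α) ∣ A ↔ ∀ i j, (c : α) ∣ A i j := by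
  constructor
  · rintro ⟨B, rfl⟩ i j
    exact ⟨B i j, by rw [← nsmul_eq_mul, smul_apply, nsmul_eq_mul]⟩
  · intro h
    choose B hB using h
    exact ⟨of B, by ext i j; rw [← nsmul_eq_mul, smul_apply, nsmul_eq_mul, of_apply, hB]⟩

lemma eq_zero_of_forall_natCast_pow_dvd {q : ℕ} (hq : q ≠ 1) {A : Matrix n n ℤ}
    (h : ∀ k, (q : Matrix n n ℤ) ^ k ∣ A) : A = 0 := by
  ext i j
  by_contra hA
  obtain ⟨k, hk⟩ := Int.finiteMultiplicity_iff (a := q).2 ⟨by simpa using hq, hA⟩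
  simp only [← Nat.cast_pow] at h hk
  exact hk (natCast_dvd_iff.1 (h (k + 1)) i j)

lemma GeneralLinearGroup.natCast_dvd_sub_one_of_mem_ker_map {m : ℕ} {g : GL n ℤ}
    (hg : g ∈ (GeneralLinearGroup.map (Int.castRingHom (ZMod m))).ker) :
    (m : Matrix n n ℤ) ∣ g - 1 := by
  refine natCast_dvd_iff.2 fun i j => ?_
  have hij := congrArg (fun g : GL n (ZMod m) => (g : Matrix n n (ZMod m)) i j) hg
  simp only [GeneralLinearGroup.map_apply, Units.val_one, Int.coe_castRingHom] at hij
  rw [sub_apply, ← ZMod.intCast_eq_intCast_iff_dvd_sub, hij]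
  rcases eq_or_ne i j with rfl | hne <;> simp [*]

end Matrix

/-- Minkowski's theorem: for `m > 2`, the kernel of the reduction homomorphism
`GL(n, ℤ) → GL(n, ℤ/mℤ)` is torsion-free. -/
theorem ker_reduction_torsionFree (n m : ℕ) (hm : 2 < m) :
    ∀ g ∈ (Matrix.GeneralLinearGroup.map (n := Fin n) (Int.castRingHom (ZMod m))).ker,
      IsOfFinOrder g → g = 1 := by
  refine Subgroup.eq_one_of_isOfFinOrder_of_forall_prime _ fun p hp g hg hgp => ?_
  obtain ⟨q, k, hq, hqk, hqkm⟩ := Nat.exists_prime_pow_dvd_of_two_lt hm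
  have hdvd : (q : Matrix (Fin n) (Fin n) ℤ) ^ k ∣ g - 1 := by
    rw [← Nat.cast_pow]
    exact (Nat.cast_dvd_cast hqkm).trans
      (Matrix.GeneralLinearGroup.natCast_dvd_sub_one_of_mem_ker_map hg)
  have hpow : (1 + ((g : Matrix (Fin n) (Fin n) ℤ) - 1)) ^ p = 1 := by
    rw [add_sub_cancel, ← Units.val_pow_eq_pow_val, hgp, Units.val_one]
  exact Units.ext <| sub_eq_zero.1 <| Matrix.eq_zero_of_forall_natCast_pow_dvd hq.one_lt.ne'
    (natCast_pow_dvd_of_one_add_pow_eq_one hp hq hqk hdvd hpow)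
end
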